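/- Let λ be the fat hook ((a_1+a_2)^{a_1}, a_1^{a_2}) of length ℓ = a_1 + a_2, and let M(z) = Σ_{k≥0} C_k^λ z^{k+1} be the generating function of the counts of λ-plane trees. Then M satisfies the cubic equation M³ + ((a_1 − a_2)z − 2)M² + (1 + 2a_2 z)M − z(ℓ − a_1² z) = 0 as formal power series. -/

import Mathlib

def cellMem (L : ℕ → ℕ) (i j : ℕ) : Prop := 1 ≤ i ∧ 1 ≤ j ∧ j ≤ L i

def IsPartitionOfLength (L : ℕ → ℕ) (l : ℕ) : Prop :=
  (∀ i j, 1 ≤ i → i ≤ j → L j ≤ L i) ∧ ∀ i, 1 ≤ i → (1 ≤ L i ↔ i ≤ l)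

def SelfConjugate (L : ℕ → ℕ) : Prop := ∀ i j, cellMem L i j ↔ cellMem L j i

inductive LTree where
  | node : ℕ → List LTree → LTree

namespace LTree

def label : LTree → ℕ
  | node a _ => a

def size : LTree → ℕ
  | node _ ts => 1 + (ts.attach.map (fun t => size t.1)).sum
decreasing_by
  have := List.sizeOf_lt_of_mem t.2
  simp only [node.sizeOf_spec]
  omega

def countLabel (i : ℕ) : LTree → ℕ
  | node a ts => (if a = i then 1 else 0) + (ts.attach.map (fun t => countLabel i t.1)).sum
decreasing_by
  have := List.sizeOf_lt_of_mem t.2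
  simp only [node.sizeOf_spec]
  omega

def Valid (P : ℕ → ℕ → Prop) : LTree → Prop
  | node a ts => ∀ t ∈ ts, P a t.label ∧ Valid P t
decreasing_by
  rename_i ht
  have := List.sizeOf_lt_of_mem ht
  simp only [node.sizeOf_spec]
  omega

def LabelsLe (l : ℕ) : LTree → Prop
  | node a ts => (1 ≤ a ∧ a ≤ l) ∧ ∀ t ∈ ts, LabelsLe l t
decreasing_by
  rename_i ht
  have := List.sizeOf_lt_of_mem ht
  simp only [node.sizeOf_spec]
  omega

end LTree

/-- A `λ`-plane tree: labels in `[1, l]` and every edge `{u, v}` satisfies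
`(c u, c v) ∈ λ`. -/
def IsLambdaPlaneTree (L : ℕ → ℕ) (l : ℕ) (t : LTree) : Prop :=
  LTree.LabelsLe l t ∧ LTree.Valid (fun u v => cellMem L u v) t

/-- An `r`-plane tree: labels in `[1, r]` and every edge `{u, v}` satisfies
`c u + c v ≤ r + 1`. -/
def IsRPlaneTree (r : ℕ) (t : LTree) : Prop :=
  LTree.LabelsLe r t ∧ LTree.Valid (fun u v => u + v ≤ r + 1) t

/-- `C_k^λ`: the number of `λ`-plane trees on `k + 1` vertices. -/
noncomputable def lambdaPlaneCount (L : ℕ → ℕ) (l k : ℕ) : ℕ :=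
  Nat.card {t : LTree // t.size = k + 1 ∧ IsLambdaPlaneTree L l t}

/-- The number of `r`-plane trees on `k + 1` vertices. -/
noncomputable def rPlaneCount (r k : ℕ) : ℕ :=
  Nat.card {t : LTree // t.size = k + 1 ∧ IsRPlaneTree r t}

/-!
Detaching the first subtree of the root shows that the generating series `F a` of trees with
root label `a` whose edges (parent, child) all lie in a relation `P` satisfies
`F a = z + (∑_{P a b} F b) * F a`. For `P = λ` the fat hook's rows `1, …, a₁` have full length `ℓ`
and its rows `a₁ + 1, …, ℓ` length `a₁`: a vertex labelled `≤ a₁` may have children with any label,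
one labelled `> a₁` only children labelled `≤ a₁`. So `F a` only depends on the block of `a`, and
with `H₁ = F 1`, `H₂ = F ℓ` we get `M = a₁ H₁ + a₂ H₂`, `H₁ = z + M H₁` and `H₂ = z + a₁ H₁ H₂`.
Eliminating `H₁` and `H₂` gives the cubic.
-/

open PowerSeries Finset

section SizeSeries

variable {α β : Type*}

/-- This is the generating function of `α` by weight only when the fibres of `w` are finite:
`Nat.card` of an infinite type is `0`. -/
noncomputable def sizeSeries (w : α → ℕ) : ℚ⟦X⟧ :=
  PowerSeries.mk fun n => (Nat.card {a // w a = n} : ℚ)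

theorem coeff_sizeSeries (w : α → ℕ) (n : ℕ) :
    coeff n (sizeSeries w) = Nat.card {a // w a = n} :=
  coeff_mk _ _

theorem sizeSeries_congr (e : α ≃ β) {v : α → ℕ} {w : β → ℕ} (h : ∀ a, w (e a) = v a) :
    sizeSeries v = sizeSeries w := by
  ext n
  simp only [coeff_sizeSeries]
  exact congrArg _ (Nat.card_congr (e.subtypeEquiv fun a => by rw [h]))

theorem sizeSeries_const_one : sizeSeries (fun _ : Unit => 1) = X := by
  ext n
  rw [coeff_sizeSeries, coeff_X]
  split_ifs with hn
  · subst hn; simp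
  · simp [Ne.symm hn]

theorem sizeSeries_sumElim (v : α → ℕ) (w : β → ℕ) [∀ n, Finite {a // v a = n}]
    [∀ n, Finite {b // w b = n}] :
    sizeSeries (Sum.elim v w) = sizeSeries v + sizeSeries w := by
  ext n
  simp only [map_add, coeff_sizeSeries]
  rw [Nat.card_congr (Equiv.subtypeSum (p := fun x => Sum.elim v w x = n))]
  exact_mod_cast Nat.card_sum (α := {a // v a = n}) (β := {b // w b = n})

def fiberAddEquiv (v : α → ℕ) (w : β → ℕ) (n : ℕ) :
    {x : α × β // v x.1 + w x.2 = n} ≃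
      Σ p : antidiagonal n, {a // v a = p.1.1} × {b // w b = p.1.2} where
  toFun x := ⟨⟨(v x.1.1, w x.1.2), mem_antidiagonal.2 x.2⟩, ⟨x.1.1, rfl⟩, ⟨x.1.2, rfl⟩⟩
  invFun y := ⟨(y.2.1.1, y.2.2.1), by rw [y.2.1.2, y.2.2.2]; exact mem_antidiagonal.1 y.1.2⟩
  left_inv _ := rfl
  right_inv := by
    rintro ⟨⟨⟨i, j⟩, hp⟩, ⟨a, ha : v a = i⟩, ⟨b, hb : w b = j⟩⟩
    subst ha hb
    rfl

instance finite_fiber_add (v : α → ℕ) (w : β → ℕ) [∀ n, Finite {a // v a = n}]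
    [∀ n, Finite {b // w b = n}] (n : ℕ) : Finite {x : α × β // v x.1 + w x.2 = n} :=
  Finite.of_equiv _ (fiberAddEquiv v w n).symm

theorem sizeSeries_add (v : α → ℕ) (w : β → ℕ) [∀ n, Finite {a // v a = n}]
    [∀ n, Finite {b // w b = n}] :
    sizeSeries (fun x : α × β => v x.1 + w x.2) = sizeSeries v * sizeSeries w := by
  ext n
  rw [coeff_mul, coeff_sizeSeries, Nat.card_congr (fiberAddEquiv v w n), Nat.card_sigma,
    ← sum_coe_sort (antidiagonal n)]
  push_cast
  simp only [Nat.card_prod, Nat.cast_mul, coeff_sizeSeries]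

end SizeSeries

namespace LTree

theorem size_node (a : ℕ) (ts : List LTree) : (node a ts).size = 1 + (ts.map size).sum := by
  rw [size, List.attach_map_val]

theorem one_le_size (t : LTree) : 1 ≤ t.size := by
  cases t
  rw [size_node]
  omega

theorem length_le_sum_size (ts : List LTree) : ts.length ≤ (ts.map size).sum := by
  simpa using List.length_le_sum_of_one_le (ts.map size)
    (by simpa using fun t _ => one_le_size t)

def graft : LTree → LTree → LTree
  | node b ts, c => node b (c :: ts)

theorem label_graft (t c : LTree) : (t.graft c).label = t.label := by
  cases t
  rfl

theorem size_graft (t c : LTree) : (t.graft c).size = c.size + t.size := by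
  cases t
  simp only [graft, size_node, List.map_cons, List.sum_cons]
  omega

def IsAdmissible (l : ℕ) (P : ℕ → ℕ → Prop) (t : LTree) : Prop :=
  LabelsLe l t ∧ Valid P t

variable {l : ℕ} {P : ℕ → ℕ → Prop}

theorem isAdmissible_node {a : ℕ} {ts : List LTree} :
    IsAdmissible l P (node a ts) ↔
      (1 ≤ a ∧ a ≤ l) ∧ ∀ t ∈ ts, P a t.label ∧ IsAdmissible l P t := by
  rw [IsAdmissible, LabelsLe, Valid]
  simp only [IsAdmissible]
  grind

theorem isAdmissible_graft {t c : LTree} :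
    IsAdmissible l P (t.graft c) ↔
      (P t.label c.label ∧ IsAdmissible l P c) ∧ IsAdmissible l P t := by
  cases t
  simp only [graft, isAdmissible_node, List.mem_cons, forall_eq_or_imp, label]
  tauto

theorem IsAdmissible.label_mem {t : LTree} (ht : IsAdmissible l P t) :
    1 ≤ t.label ∧ t.label ≤ l := by
  cases t
  exact (isAdmissible_node.1 ht).1

theorem IsAdmissible.node_relabel {a a' : ℕ} {ts : List LTree} (h : IsAdmissible l P (node a ts))
    (ha' : 1 ≤ a' ∧ a' ≤ l) (hP : ∀ c, P a c → P a' c) : IsAdmissible l P (node a' ts) :=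
  isAdmissible_node.2 ⟨ha', fun t ht =>
    ⟨hP _ (isAdmissible_node.1 h |>.2 t ht).1, (isAdmissible_node.1 h |>.2 t ht).2⟩⟩

theorem finite_setOf_labelsLe_size_le (l n : ℕ) :
    {t : LTree | LabelsLe l t ∧ t.size ≤ n}.Finite := by
  induction n with
  | zero => exact Set.finite_empty.subset fun t ht => absurd ht.2 (by have := one_le_size t; omega)
  | succ n ih =>
    -- a tree of size `≤ n + 1` is a root label in `[1, l]` and at most `n` subtrees of size `≤ n`
    have : Finite {t : LTree | LabelsLe l t ∧ t.size ≤ n} := ih.to_subtype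
    have hlists := (List.finite_length_le {t : LTree | LabelsLe l t ∧ t.size ≤ n} n).image
      (List.map Subtype.val)
    refine (((Set.finite_Icc 1 l).prod hlists).image fun p => node p.1 p.2).subset ?_
    rintro ⟨a, ts⟩ ⟨hlab, hsize⟩
    rw [LabelsLe] at hlab
    rw [size_node] at hsize
    have hts : ∀ t ∈ ts, LabelsLe l t ∧ t.size ≤ n := fun t ht =>
      ⟨hlab.2 t ht, by have := List.le_sum_of_mem (List.mem_map_of_mem (f := size) ht); omega⟩
    refine ⟨(a, ts), ⟨hlab.1, ts.attach.map fun t => ⟨t.1, hts t.1 t.2⟩, ?_, ?_⟩, rfl⟩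
    · show List.length _ ≤ n
      have := length_le_sum_size ts
      simpa using (show ts.length ≤ n by omega)
    · simp [List.map_map]

def AdmissibleTree (l : ℕ) (P : ℕ → ℕ → Prop) (S : ℕ → Prop) : Type :=
  {t : LTree // IsAdmissible l P t ∧ S t.label}

variable {l : ℕ} {P : ℕ → ℕ → Prop}

def AdmissibleTree.size {S : ℕ → Prop} (t : AdmissibleTree l P S) : ℕ :=
  t.1.size

instance AdmissibleTree.finite_size_eq (S : ℕ → Prop) (n : ℕ) :
    Finite {t : AdmissibleTree l P S // t.size = n} := by
  have := (finite_setOf_labelsLe_size_le l n).to_subtype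
  exact Finite.of_injective (fun t => (⟨t.1.1, t.1.2.1.1, t.2.le⟩ :
    {t : LTree | LabelsLe l t ∧ t.size ≤ n}))
    fun s t h => Subtype.ext (Subtype.ext (by simpa using h))

noncomputable def treeSeries (l : ℕ) (P : ℕ → ℕ → Prop) (S : ℕ → Prop) : ℚ⟦X⟧ :=
  sizeSeries (AdmissibleTree.size (l := l) (P := P) (S := S))

theorem coeff_treeSeries (S : ℕ → Prop) (n : ℕ) :
    coeff n (treeSeries l P S) =
      Nat.card {t : LTree // t.size = n ∧ IsAdmissible l P t ∧ S t.label} := by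
  rw [treeSeries, coeff_sizeSeries]
  exact congrArg _ (Nat.card_congr ((Equiv.subtypeSubtypeEquivSubtypeInter
    (fun t : LTree => IsAdmissible l P t ∧ S t.label) (fun t => t.size = n)).trans
    (Equiv.subtypeEquivRight fun _ => and_comm)))

theorem lambdaPlaneCount_eq_coeff_treeSeries (L : ℕ → ℕ) (l k : ℕ) :
    (lambdaPlaneCount L l k : ℚ) = coeff (k + 1) (treeSeries l (cellMem L) fun _ => True) := by
  rw [coeff_treeSeries]
  simp only [and_true]
  rfl

theorem coeff_zero_treeSeries (S : ℕ → Prop) : coeff 0 (treeSeries l P S) = 0 := by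
  rw [coeff_treeSeries, Nat.cast_eq_zero, Nat.card_eq_zero]
  exact .inl ⟨fun t => Nat.one_le_iff_ne_zero.1 (one_le_size t.1) t.2.1⟩

theorem treeSeries_congr {S S' : ℕ → Prop} (h : ∀ b, 1 ≤ b → b ≤ l → (S b ↔ S' b)) :
    treeSeries l P S = treeSeries l P S' :=
  sizeSeries_congr (Equiv.subtypeEquivRight fun _ => and_congr_right fun ht =>
    h _ ht.label_mem.1 ht.label_mem.2) fun _ => rfl

theorem treeSeries_mem_eq_sum (s : Finset ℕ) :
    treeSeries l P (· ∈ s) = ∑ b ∈ s, treeSeries l P (· = b) := by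
  ext n
  simp only [treeSeries, map_sum, coeff_sizeSeries]
  let e : {t : AdmissibleTree l P (· ∈ s) // t.size = n} ≃
      Σ b : s, {t : AdmissibleTree l P (· = b) // t.size = n} :=
    { toFun := fun t => ⟨⟨t.1.1.label, t.1.2.2⟩, ⟨t.1.1, t.1.2.1, rfl⟩, t.2⟩
      invFun := fun x => ⟨⟨x.2.1.1, x.2.1.2.1, by rw [x.2.1.2.2]; exact x.1.2⟩, x.2.2⟩
      left_inv := fun _ => rfl
      right_inv := by
        rintro ⟨⟨b, hb⟩, ⟨t, ht, htb : t.label = b⟩, hn⟩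
        subst htb
        rfl }
  rw [Nat.card_congr e, Nat.card_sigma, ← sum_coe_sort s]
  push_cast
  rfl

def firstChildEquiv {a : ℕ} (ha : 1 ≤ a ∧ a ≤ l) :
    Unit ⊕ (AdmissibleTree l P (P a) × AdmissibleTree l P (· = a)) ≃
      AdmissibleTree l P (· = a) where
  toFun
    | .inl _ => ⟨node a [], isAdmissible_node.2 ⟨ha, by simp⟩, rfl⟩
    | .inr (c, t) => ⟨t.1.graft c.1, isAdmissible_graft.2 ⟨⟨t.2.2.symm ▸ c.2.2, c.2.1⟩, t.2.1⟩,
        (label_graft _ _).trans t.2.2⟩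
  invFun
    | ⟨node _ [], _⟩ => .inl ()
    | ⟨node b (c :: ts), h⟩ =>
      have h' := (isAdmissible_graft (t := node b ts)).1 h.1
      .inr (⟨c, h'.1.2, h.2 ▸ h'.1.1⟩, ⟨node b ts, h'.2, h.2⟩)
  left_inv
    | .inl _ => rfl
    | .inr (c, ⟨node b ts, h⟩) => rfl
  right_inv
    | ⟨node b [], h⟩ => by cases h.2; rfl
    | ⟨node b (c :: ts), h⟩ => rfl

theorem treeSeries_eq_X_add {a : ℕ} (ha : 1 ≤ a ∧ a ≤ l) :
    treeSeries l P (· = a) = X + treeSeries l P (P a) * treeSeries l P (· = a) := by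
  have h := sizeSeries_congr (firstChildEquiv (P := P) ha) (w := AdmissibleTree.size)
    (v := Sum.elim (fun _ => 1) fun x => x.1.size + x.2.size) <| by
      rintro (_ | ⟨c, ⟨t, ht⟩⟩)
      · show (node a []).size = 1
        simp [size_node]
      · exact size_graft t c.1
  rw [sizeSeries_sumElim, sizeSeries_const_one, sizeSeries_add] at h
  exact h.symm

def rootRelabelEquiv {b b' : ℕ} (hb : 1 ≤ b ∧ b ≤ l) (hb' : 1 ≤ b' ∧ b' ≤ l)
    (h : ∀ c, P b c ↔ P b' c) : AdmissibleTree l P (· = b) ≃ AdmissibleTree l P (· = b') where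
  toFun | ⟨node _ ts, ht, rfl⟩ => ⟨node b' ts, ht.node_relabel hb' fun c => (h c).1, rfl⟩
  invFun | ⟨node _ ts, ht, rfl⟩ => ⟨node b ts, ht.node_relabel hb fun c => (h c).2, rfl⟩
  left_inv | ⟨node _ _, _, rfl⟩ => rfl
  right_inv | ⟨node _ _, _, rfl⟩ => rfl

theorem treeSeries_root_congr {b b' : ℕ} (hb : 1 ≤ b ∧ b ≤ l) (hb' : 1 ≤ b' ∧ b' ≤ l)
    (h : ∀ c, P b c ↔ P b' c) : treeSeries l P (· = b) = treeSeries l P (· = b') :=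
  sizeSeries_congr (rootRelabelEquiv hb hb' h) fun
    | ⟨node _ ts, _, rfl⟩ => by
      show (node b' ts).size = (node b ts).size
      rw [size_node, size_node]

end LTree

/-- With `u = a h₁` and `w = b h₂` the hypotheses say `u (1 - m) = a z` and `w (1 - u) = b z`,
so `w (1 - m) = m (1 - m) - a z` and `w² = (a + b) z - m (1 - m)`; squaring the first and
substituting the second gives the cubic. -/
theorem cubic_eq_zero_of_system {R : Type*} [CommRing R] {a b z h₁ h₂ m : R}
    (hm : m = a * h₁ + b * h₂) (e₁ : h₁ = z + m * h₁) (e₂ : h₂ = z + a * h₁ * h₂) :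
    m ^ 3 + ((a - b) * z - 2) * m ^ 2 + (1 + 2 * b * z) * m - z * ((a + b) - a ^ 2 * z) = 0 := by
  subst hm
  linear_combination (a * ((a * h₁ + b * h₂) * (1 - (a * h₁ + b * h₂)) - a * z
    + b * h₂ * (1 - (a * h₁ + b * h₂)) + (1 - (a * h₁ + b * h₂)) ^ 2)) * e₁
    + (b * (1 - (a * h₁ + b * h₂)) ^ 2) * e₂

/-- `L` is the fat hook `((a₁ + a₂)^{a₁}, a₁^{a₂})`. -/
def IsFatHook (a₁ a₂ : ℕ) (L : ℕ → ℕ) : Prop :=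
  ∀ i, L i = if 1 ≤ i ∧ i ≤ a₁ then a₁ + a₂ else if i ≤ a₁ + a₂ then a₁ else 0

namespace IsFatHook

open LTree

variable {a₁ a₂ : ℕ} {L : ℕ → ℕ}

theorem cellMem_iff (hL : IsFatHook a₁ a₂ L) (u v : ℕ) :
    cellMem L u v ↔ 1 ≤ u ∧ u ≤ a₁ + a₂ ∧ 1 ≤ v ∧ v ≤ a₁ + a₂ ∧ (a₁ < u → v ≤ a₁) := by
  rw [cellMem, hL]
  split_ifs <;> omega

theorem sum_treeSeries_Ioc_zero (hL : IsFatHook a₁ a₂ L) :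
    ∑ b ∈ Ioc 0 a₁, treeSeries (a₁ + a₂) (cellMem L) (· = b) =
      (a₁ : ℚ⟦X⟧) * treeSeries (a₁ + a₂) (cellMem L) (· = 1) := by
  have h (b : ℕ) (hb : b ∈ Ioc 0 a₁) :
      treeSeries (a₁ + a₂) (cellMem L) (· = b) = treeSeries (a₁ + a₂) (cellMem L) (· = 1) := by
    rw [mem_Ioc] at hb
    exact treeSeries_root_congr ⟨hb.1, by omega⟩ ⟨le_rfl, by omega⟩ fun c => by
      rw [hL.cellMem_iff, hL.cellMem_iff]
      omega
  rw [sum_congr rfl h, sum_const, Nat.card_Ioc, nsmul_eq_mul, Nat.sub_zero]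

theorem sum_treeSeries_Ioc (hL : IsFatHook a₁ a₂ L) :
    ∑ b ∈ Ioc a₁ (a₁ + a₂), treeSeries (a₁ + a₂) (cellMem L) (· = b) =
      (a₂ : ℚ⟦X⟧) * treeSeries (a₁ + a₂) (cellMem L) (· = a₁ + a₂) := by
  have h (b : ℕ) (hb : b ∈ Ioc a₁ (a₁ + a₂)) :
      treeSeries (a₁ + a₂) (cellMem L) (· = b) =
        treeSeries (a₁ + a₂) (cellMem L) (· = a₁ + a₂) := by
    rw [mem_Ioc] at hb
    exact treeSeries_root_congr ⟨by omega, hb.2⟩ ⟨by omega, le_rfl⟩ fun c => by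
      rw [hL.cellMem_iff, hL.cellMem_iff]
      omega
  rw [sum_congr rfl h, sum_const, Nat.card_Ioc, Nat.add_sub_cancel_left, nsmul_eq_mul]

theorem treeSeries_true_eq (hL : IsFatHook a₁ a₂ L) :
    treeSeries (a₁ + a₂) (cellMem L) (fun _ => True) =
      (a₁ : ℚ⟦X⟧) * treeSeries (a₁ + a₂) (cellMem L) (· = 1) +
        (a₂ : ℚ⟦X⟧) * treeSeries (a₁ + a₂) (cellMem L) (· = a₁ + a₂) := by
  rw [treeSeries_congr (S' := (· ∈ Ioc 0 (a₁ + a₂))) fun b _ _ => by simp; omega,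
    treeSeries_mem_eq_sum, ← sum_Ioc_consecutive _ (Nat.zero_le a₁) (Nat.le_add_right a₁ a₂),
    hL.sum_treeSeries_Ioc_zero, hL.sum_treeSeries_Ioc]

theorem treeSeries_one_eq_X_add (hL : IsFatHook a₁ a₂ L) (h₁ : 1 ≤ a₁) :
    treeSeries (a₁ + a₂) (cellMem L) (· = 1) =
      X + treeSeries (a₁ + a₂) (cellMem L) (fun _ => True) *
        treeSeries (a₁ + a₂) (cellMem L) (· = 1) := by
  rw [← treeSeries_congr (S := cellMem L 1) (S' := fun _ => True) fun b _ _ => by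
    rw [hL.cellMem_iff, iff_true]
    omega]
  exact treeSeries_eq_X_add (by omega)

theorem treeSeries_last_eq_X_add (hL : IsFatHook a₁ a₂ L) (h₂ : 1 ≤ a₂) :
    treeSeries (a₁ + a₂) (cellMem L) (· = a₁ + a₂) =
      X + (a₁ : ℚ⟦X⟧) * treeSeries (a₁ + a₂) (cellMem L) (· = 1) *
        treeSeries (a₁ + a₂) (cellMem L) (· = a₁ + a₂) := by
  rw [← hL.sum_treeSeries_Ioc_zero, ← treeSeries_mem_eq_sum,
    ← treeSeries_congr (S := cellMem L (a₁ + a₂)) (S' := (· ∈ Ioc 0 a₁)) fun b _ _ => by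
      rw [hL.cellMem_iff, mem_Ioc]
      omega]
  exact treeSeries_eq_X_add (by omega)

end IsFatHook

/-- The generating function `M` of fat-hook `λ`-plane tree counts satisfies
`M³ + ((a₁ − a₂)z − 2)M² + (1 + 2a₂z)M − z(ℓ − a₁² z) = 0`. -/
theorem stmt16 (a1 a2 : ℕ) (h1 : 1 ≤ a1) (h2 : 1 ≤ a2)
    (L : ℕ → ℕ)
    (hL : ∀ i, L i = if 1 ≤ i ∧ i ≤ a1 then a1 + a2 else if i ≤ a1 + a2 then a1 else 0)
    (M : PowerSeries ℚ)
    (hM0 : PowerSeries.coeff 0 M = 0)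
    (hM : ∀ k : ℕ, PowerSeries.coeff (k + 1) M = (lambdaPlaneCount L (a1 + a2) k : ℚ)) :
    M ^ 3 + (PowerSeries.C ((a1 : ℚ) - (a2 : ℚ)) * PowerSeries.X - 2) * M ^ 2 +
        (1 + 2 * PowerSeries.C ((a2 : ℚ)) * PowerSeries.X) * M -
        PowerSeries.X * (PowerSeries.C ((a1 : ℚ) + (a2 : ℚ)) -
          PowerSeries.C ((a1 : ℚ) ^ 2) * PowerSeries.X) = 0 := by
  have hfat : IsFatHook a1 a2 L := hL
  obtain rfl : M = LTree.treeSeries (a1 + a2) (cellMem L) fun _ => True := by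
    ext (_ | k)
    · rw [hM0, LTree.coeff_zero_treeSeries]
    · rw [hM k, LTree.lambdaPlaneCount_eq_coeff_treeSeries]
  simp only [map_sub, map_add, map_pow, map_natCast]
  exact cubic_eq_zero_of_system hfat.treeSeries_true_eq (hfat.treeSeries_one_eq_X_add h1)
    (hfat.treeSeries_last_eq_X_add h2)
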